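/- Let n, m ≥ 1. Then the codensity of the lattice of transfer systems on the product of chains [n] × [m] satisfies ρ(Tr([n] × [m])) = (m+2)(m+3)(n+2)(n+3)(3mn+4m+4n) / (36(m+1)(n+1)(2m+2n+mn)²). -/

import Mathlib

/-- A transfer system on a finite lattice `L` (with trivial group action): a partial order
refining `≤` which is closed under restriction. -/
structure TransferSystem (L : Type*) [Lattice L] : Type _ where
  rel : L → L → Prop
  refl : ∀ x, rel x x
  trans : ∀ {x y z}, rel x y → rel y z → rel x z
  le_of_rel : ∀ {x y}, rel x y → x ≤ y
  restrict : ∀ {x y x'}, rel x y → x' ≤ y → rel (x ⊓ x') x'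

namespace TransferSystem

variable {L : Type*} [Lattice L]

theorem ext' {S T : TransferSystem L} (h : S.rel = T.rel) : S = T := by
  cases S; cases T; simpa using h

instance : PartialOrder (TransferSystem L) where
  le S T := ∀ ⦃x y : L⦄, S.rel x y → T.rel x y
  le_refl S := fun _ _ h => h
  le_trans S T U h1 h2 := fun _ _ h => h2 (h1 h)
  le_antisymm S T h1 h2 :=
    ext' (by funext x y; exact propext ⟨fun h => h1 h, fun h => h2 h⟩)

/-- The intersection of a set of transfer systems. -/
def sInfTS (s : Set (TransferSystem L)) : TransferSystem L where
  rel x y := x ≤ y ∧ ∀ T ∈ s, T.rel x y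
  refl x := ⟨le_refl x, fun T _ => T.refl x⟩
  trans h1 h2 := ⟨h1.1.trans h2.1, fun T hT => T.trans (h1.2 T hT) (h2.2 T hT)⟩
  le_of_rel h := h.1
  restrict h hle := ⟨inf_le_right, fun T hT => T.restrict (h.2 T hT) hle⟩

instance : InfSet (TransferSystem L) := ⟨sInfTS⟩

theorem sInf_rel (s : Set (TransferSystem L)) (x y : L) :
    (sInf s).rel x y ↔ x ≤ y ∧ ∀ T ∈ s, T.rel x y := Iff.rfl

/-- The complete lattice of transfer systems, ordered by refinement. -/
instance : CompleteLattice (TransferSystem L) :=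
  completeLatticeOfInf _ (fun s =>
    ⟨fun T hT _ _ h => h.2 T hT,
     fun T hT _ _ h => ((sInf_rel s _ _).2 ⟨T.le_of_rel h, fun S hS => hT hS h⟩)⟩)

end TransferSystem

/-- The codensity `ρ` of (the reduced formal context of) a finite lattice `α`:
the number of pairs `(A, B)` with `A` join-irreducible, `B` meet-irreducible and `A ≰ B`,
divided by the product of the numbers of join-irreducibles and meet-irreducibles. -/
noncomputable def codensity (α : Type*) [Lattice α] : ℚ :=
  (Nat.card {p : α × α // SupIrred p.1 ∧ InfIrred p.2 ∧ ¬ p.1 ≤ p.2} : ℚ) /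
    ((Nat.card {a : α // SupIrred a} : ℚ) * (Nat.card {a : α // InfIrred a} : ℚ))

/-!
Join-irreducible transfer systems on a finite lattice `L` are the ones generated by a single
relation `x → y` with `x < y`; meet-irreducible ones are the largest transfer systems avoiding a
single `x → y`. The generated system for `a → b` lies below the one avoiding `x → y` unless
`x ≤ a`, `y ≤ b` and `y ≰ a`, so the codensity of `Tr(L)` compares squares `(x, y) ≤ (a, b)` of
pairs `x ≤ y`, `a ≤ b` with `y ≰ a` against pairs `x < y`. Counts of pairs, squares and
`4`-chains `x ≤ y ≤ a ≤ b` are multiplicative on products; on a chain with `s` elements they are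
`multichoose s 2`, `2 multichoose s 4 - multichoose s 3` and `multichoose s 4`.
-/

namespace TransferSystem

variable {L : Type*} [Lattice L] {x y x' y' a b : L} {S T : TransferSystem L}

theorem inf_rel_of (hS : S.rel x y) (hT : T.rel x y) : (S ⊓ T).rel x y :=
  (sInf_rel _ _ _).2 ⟨S.le_of_rel hS, by rintro U (rfl | rfl) <;> assumption⟩

/-- For `x ≤ y`, the smallest transfer system containing `x → y`: besides the identities it
consists of the restrictions `x ⊓ b → b` with `b ≤ y`. -/
def gen (x y : L) : TransferSystem L where
  rel a b := a = b ∨ (b ≤ y ∧ a = x ⊓ b)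
  refl a := Or.inl rfl
  trans := by
    rintro a b c (rfl | ⟨hb, rfl⟩) (rfl | ⟨hc, rfl⟩)
    · exact Or.inl rfl
    · exact Or.inr ⟨hc, rfl⟩
    · exact Or.inr ⟨hb, rfl⟩
    · exact Or.inr ⟨hc, by rw [← inf_assoc, inf_idem]⟩
  le_of_rel := by rintro a b (rfl | ⟨hb, rfl⟩); exacts [le_rfl, inf_le_right]
  restrict := by
    rintro a b a' (rfl | ⟨hb, rfl⟩) ha'
    · exact Or.inl (inf_eq_right.2 ha')
    · exact Or.inr ⟨ha'.trans hb, by rw [inf_assoc, inf_eq_right.2 ha']⟩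

theorem gen_rel_self (h : x ≤ y) : (gen x y).rel x y :=
  Or.inr ⟨le_rfl, (inf_eq_left.2 h).symm⟩

theorem gen_le_iff (h : x ≤ y) : gen x y ≤ T ↔ T.rel x y := by
  refine ⟨fun hT => hT (gen_rel_self h), ?_⟩
  rintro hT a b (rfl | ⟨hb, rfl⟩)
  exacts [T.refl a, T.restrict hT hb]

/-- `gen x y` without the relation `x ⊓ y → y`; for `x < y` it is the unique lower cover
of `gen x y`. -/
def genBelow (x y : L) : TransferSystem L where
  rel a b := a = b ∨ (b ≤ y ∧ b ≠ y ∧ a = x ⊓ b)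
  refl a := Or.inl rfl
  trans := by
    rintro a b c (rfl | ⟨hb, hb', rfl⟩) (rfl | ⟨hc, hc', rfl⟩)
    · exact Or.inl rfl
    · exact Or.inr ⟨hc, hc', rfl⟩
    · exact Or.inr ⟨hb, hb', rfl⟩
    · exact Or.inr ⟨hc, hc', by rw [← inf_assoc, inf_idem]⟩
  le_of_rel := by rintro a b (rfl | ⟨hb, -, rfl⟩); exacts [le_rfl, inf_le_right]
  restrict := by
    rintro a b a' (rfl | ⟨hb, hb', rfl⟩) ha'
    · exact Or.inl (inf_eq_right.2 ha')
    · refine Or.inr ⟨ha'.trans hb, fun he => hb' (le_antisymm hb (he ▸ ha')), ?_⟩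
      rw [inf_assoc, inf_eq_right.2 ha']

theorem genBelow_lt_gen (hxy : x < y) : genBelow x y < gen x y := by
  refine lt_of_le_not_ge ?_ fun h => ?_
  · rintro a b (rfl | ⟨hb, -, rfl⟩)
    exacts [(gen x y).refl a, Or.inr ⟨hb, rfl⟩]
  · rcases h (gen_rel_self hxy.le) with h | ⟨-, hne, -⟩
    exacts [hxy.ne h, hne rfl]

theorem le_genBelow_of_lt (hxy : x ≤ y) (h : S < gen x y) : S ≤ genBelow x y := by
  intro a b hab
  rcases h.le hab with rfl | ⟨hb, rfl⟩
  · exact Or.inl rfl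
  · refine Or.inr ⟨hb, fun hby => h.not_ge ((gen_le_iff hxy).2 ?_), rfl⟩
    rwa [hby, inf_eq_left.2 hxy] at hab

theorem supIrred_gen (hxy : x < y) : SupIrred (gen x y) := by
  refine ⟨fun hmin => hmin.not_lt (genBelow_lt_gen hxy), fun S T h => ?_⟩
  by_contra! hne
  have hS := le_genBelow_of_lt hxy.le (lt_of_le_of_ne (h ▸ le_sup_left) hne.1)
  have hT := le_genBelow_of_lt hxy.le (lt_of_le_of_ne (h ▸ le_sup_right) hne.2)
  exact (genBelow_lt_gen hxy).not_ge (h ▸ sup_le hS hT)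

theorem eq_of_gen_eq (hxy : x < y) (hxy' : x' < y') (h : gen x y = gen x' y') :
    x = x' ∧ y = y' := by
  rcases h ▸ gen_rel_self hxy'.le with h' | ⟨hy', hx'⟩
  · exact absurd h' hxy'.ne
  rcases h.symm ▸ gen_rel_self hxy.le with h' | ⟨hy, hx⟩
  · exact absurd h' hxy.ne
  exact ⟨le_antisymm (hx.le.trans inf_le_left) (hx'.le.trans inf_le_left), le_antisymm hy hy'⟩

theorem exists_eq_gen_of_supIrred [Finite L] (hT : SupIrred T) :
    ∃ x y, x < y ∧ T = gen x y := by
  classical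
  have := Fintype.ofFinite L
  let pairs := Finset.univ.filter fun p : L × L => T.rel p.1 p.2 ∧ p.1 ≠ p.2
  have hsup : pairs.sup (fun p => gen p.1 p.2) = T := by
    refine le_antisymm (Finset.sup_le fun p hp => ?_) fun a b hab => ?_
    · have hrel := (Finset.mem_filter.1 hp).2.1
      exact (gen_le_iff (T.le_of_rel hrel)).2 hrel
    · rcases eq_or_ne a b with rfl | hne
      · exact TransferSystem.refl _ a
      · exact Finset.le_sup (f := fun p => gen p.1 p.2)
          (Finset.mem_filter.2 ⟨Finset.mem_univ (a, b), hab, hne⟩) (gen_rel_self (T.le_of_rel hab))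
  obtain ⟨p, hp, hpT⟩ := hT.finset_sup_eq hsup
  obtain ⟨hrel, hne⟩ := (Finset.mem_filter.1 hp).2
  exact ⟨p.1, p.2, lt_of_le_of_ne (T.le_of_rel hrel) hne, hpT.symm⟩

/-- For `x < y`, the largest transfer system not containing `x → y`. -/
def avoiding (x y : L) : TransferSystem L where
  rel a b := a ≤ b ∧ (x ≤ a → y ≤ b → y ≤ a)
  refl _ := ⟨le_rfl, fun _ h => h⟩
  trans h1 h2 := ⟨h1.1.trans h2.1, fun hxa hyc => h1.2 hxa (h2.2 (hxa.trans h1.1) hyc)⟩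
  le_of_rel h := h.1
  restrict h ha' := ⟨inf_le_right,
    fun hxa hya' => le_inf (h.2 (hxa.trans inf_le_left) (hya'.trans ha')) hya'⟩

theorem not_avoiding_rel (hxy : x < y) : ¬ (avoiding x y).rel x y :=
  fun h => hxy.not_ge (h.2 le_rfl le_rfl)

theorem rel_of_avoiding_lt (hxy : x ≤ y) (h : avoiding x y < S) : S.rel x y := by
  obtain ⟨a, b, hab, hnab⟩ : ∃ a b, S.rel a b ∧ ¬ (avoiding x y).rel a b := by
    by_contra! hc
    exact h.not_ge fun a b hab => hc a b hab
  obtain ⟨hxa, hyb, hya⟩ : x ≤ a ∧ y ≤ b ∧ ¬ y ≤ a := by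
    by_contra! hc
    exact hnab ⟨S.le_of_rel hab, hc⟩
  have hx : (avoiding x y).rel x (a ⊓ y) :=
    ⟨le_inf hxa hxy, fun _ hy => absurd (hy.trans inf_le_left) hya⟩
  exact S.trans (h.le hx) (S.restrict hab hyb)

theorem infIrred_avoiding (hxy : x < y) : InfIrred (avoiding x y) := by
  refine ⟨fun hmax => not_avoiding_rel hxy (hmax le_top ((gen_le_iff hxy.le).1 le_top)),
    fun S T h => ?_⟩
  by_contra! hne
  have hS := rel_of_avoiding_lt hxy.le (lt_of_le_of_ne (h ▸ inf_le_left) hne.1.symm)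
  have hT := rel_of_avoiding_lt hxy.le (lt_of_le_of_ne (h ▸ inf_le_right) hne.2.symm)
  exact not_avoiding_rel hxy (h ▸ inf_rel_of hS hT)

theorem eq_of_avoiding_eq (hxy : x < y) (hxy' : x' < y') (h : avoiding x y = avoiding x' y') :
    x = x' ∧ y = y' := by
  have key : ∀ {u v u' v' : L}, u' < v' → avoiding u v = avoiding u' v' → u ≤ u' ∧ v ≤ v' := by
    intro u v u' v' huv' h
    by_contra! hc
    exact (h ▸ not_avoiding_rel huv') ⟨huv'.le, fun hu hv => absurd hv (hc hu)⟩
  obtain ⟨hx, hy⟩ := key hxy' h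
  obtain ⟨hx', hy'⟩ := key hxy h.symm
  exact ⟨le_antisymm hx hx', le_antisymm hy hy'⟩

/-- If `T` misses `a → b`, take `y ≤ b` minimal with `T` missing `a ⊓ y → y`; then `T` avoids
`a ⊓ y → y`. -/
theorem exists_le_avoiding_of_not_rel [Finite L] (hab : a ≤ b) (hT : ¬ T.rel a b) :
    ∃ x y, x < y ∧ T ≤ avoiding x y ∧ ¬ (avoiding x y).rel a b := by
  obtain ⟨y, ⟨hyb, hy⟩, hmin⟩ := Set.Finite.exists_minimal (Set.toFinite
    {d : L | d ≤ b ∧ ¬ T.rel (a ⊓ d) d}) ⟨b, le_rfl, by rwa [inf_eq_left.2 hab]⟩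
  refine ⟨a ⊓ y, y, lt_of_le_of_ne inf_le_right fun he => hy (by rw [he]; exact T.refl y), ?_, ?_⟩
  · refine fun c d hcd => ⟨T.le_of_rel hcd, fun hxc hyd => ?_⟩
    by_contra hyc
    have hlt : c ⊓ y < y := lt_of_le_of_ne inf_le_right fun he => hyc (he ▸ inf_le_left)
    have hc : T.rel (a ⊓ (c ⊓ y)) (c ⊓ y) := by
      by_contra hc
      exact hlt.not_ge (hmin ⟨inf_le_right.trans hyb, hc⟩ hlt.le)
    rw [inf_left_comm, inf_eq_right.2 hxc] at hc
    exact hy (T.trans hc (T.restrict hcd hyd))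
  · intro h
    rw [inf_eq_right.2 (h.2 inf_le_left hyb)] at hy
    exact hy (T.refl y)

theorem exists_eq_avoiding_of_infIrred [Finite L] (hT : InfIrred T) :
    ∃ x y, x < y ∧ T = avoiding x y := by
  classical
  have := Fintype.ofFinite L
  let pairs := Finset.univ.filter fun p : L × L => p.1 < p.2 ∧ T ≤ avoiding p.1 p.2
  have hinf : pairs.inf (fun p => avoiding p.1 p.2) = T := by
    refine le_antisymm (fun a b hab => ?_) (Finset.le_inf fun p hp => (Finset.mem_filter.1 hp).2.2)
    by_contra hTab
    obtain ⟨x, y, hxy, hle, hnrel⟩ :=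
      exists_le_avoiding_of_not_rel (TransferSystem.le_of_rel _ hab) hTab
    exact hnrel (Finset.inf_le (f := fun p => avoiding p.1 p.2)
      (Finset.mem_filter.2 ⟨Finset.mem_univ (x, y), hxy, hle⟩) hab)
  obtain ⟨p, hp, hpT⟩ := hT.finset_inf_eq hinf
  exact ⟨p.1, p.2, (Finset.mem_filter.1 hp).2.1, hpT.symm⟩

theorem gen_le_avoiding_iff (hab : a ≤ b) :
    gen a b ≤ avoiding x y ↔ (x ≤ a → y ≤ b → y ≤ a) := by
  rw [gen_le_iff hab]
  exact and_iff_right hab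

end TransferSystem

theorem natCard_subtype_and_add_and_not {β : Type*} [Finite β] (p q : β → Prop) :
    Nat.card {x // p x ∧ q x} + Nat.card {x // p x ∧ ¬ q x} = Nat.card {x // p x} := by
  classical
  have := Fintype.ofFinite β
  simp only [Nat.card_eq_fintype_card, Fintype.card_subtype, ← Finset.filter_filter]
  exact Finset.card_filter_add_card_filter_not _

theorem natCard_subtype_eq_mul {A B C : Type*} (e : A ≃ B × C) {p : A → Prop} {q : B → Prop}
    {r : C → Prop} (h : ∀ a, p a ↔ q (e a).1 ∧ r (e a).2) :
    Nat.card {a // p a} = Nat.card {b // q b} * Nat.card {c // r c} := by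
  rw [Nat.card_congr ((e.subtypeEquiv h).trans Equiv.subtypeProdEquivProd), Nat.card_prod]

theorem natCard_lt_add_natCard (α : Type*) [PartialOrder α] [Finite α] :
    Nat.card {p : α × α // p.1 < p.2} + Nat.card α = Nat.card {p : α × α // p.1 ≤ p.2} := by
  rw [← natCard_subtype_and_add_and_not (fun p : α × α => p.1 ≤ p.2) (fun p => p.1 = p.2),
    add_comm]
  congr 1
  · exact Nat.card_congr
      { toFun := fun p => ⟨(p, p), le_rfl, rfl⟩
        invFun := fun p => p.1.1
        left_inv := fun _ => rfl
        right_inv := fun p => Subtype.ext (Prod.ext rfl p.2.2) }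
  · exact Nat.card_congr (Equiv.subtypeEquivRight fun _ => lt_iff_le_and_ne)

section Squares

variable {α : Type*} [Preorder α]

/-- `((x, y), (a, b))` is a square: `x ≤ y`, `a ≤ b`, `x ≤ a` and `y ≤ b`. -/
def IsLESquare (q : (α × α) × (α × α)) : Prop :=
  q.1.1 ≤ q.1.2 ∧ q.2.1 ≤ q.2.2 ∧ q.1 ≤ q.2

variable {q : (α × α) × (α × α)}

theorem IsLESquare.fst_lt (hq : IsLESquare q) (h : ¬ q.1.2 ≤ q.2.1) : q.1.1 < q.1.2 :=
  lt_of_le_not_ge hq.1 fun hyx => h (hyx.trans hq.2.2.1)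

theorem IsLESquare.snd_lt (hq : IsLESquare q) (h : ¬ q.1.2 ≤ q.2.1) : q.2.1 < q.2.2 :=
  lt_of_le_not_ge hq.2.1 fun hba => h (hq.2.2.2.trans hba)

end Squares

namespace TransferSystem

variable (L : Type*) [Lattice L] [Finite L]

theorem natCard_supIrred :
    Nat.card {T : TransferSystem L // SupIrred T} = Nat.card {p : L × L // p.1 < p.2} := by
  refine (Nat.card_eq_of_bijective (fun p => ⟨gen p.1.1 p.1.2, supIrred_gen p.2⟩) ⟨?_, ?_⟩).symm
  · intro p q h
    obtain ⟨h1, h2⟩ := eq_of_gen_eq p.2 q.2 (congrArg Subtype.val h)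
    exact Subtype.ext (Prod.ext h1 h2)
  · rintro ⟨T, hT⟩
    obtain ⟨x, y, hxy, rfl⟩ := exists_eq_gen_of_supIrred hT
    exact ⟨⟨(x, y), hxy⟩, rfl⟩

theorem natCard_infIrred :
    Nat.card {T : TransferSystem L // InfIrred T} = Nat.card {p : L × L // p.1 < p.2} := by
  refine (Nat.card_eq_of_bijective (fun p => ⟨avoiding p.1.1 p.1.2, infIrred_avoiding p.2⟩)
    ⟨?_, ?_⟩).symm
  · intro p q h
    obtain ⟨h1, h2⟩ := eq_of_avoiding_eq p.2 q.2 (congrArg Subtype.val h)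
    exact Subtype.ext (Prod.ext h1 h2)
  · rintro ⟨T, hT⟩
    obtain ⟨x, y, hxy, rfl⟩ := exists_eq_avoiding_of_infIrred hT
    exact ⟨⟨(x, y), hxy⟩, rfl⟩

/-- The square `((x, y), (a, b))` corresponds to the pair `(gen a b, avoiding x y)`. -/
theorem natCard_supIrred_infIrred_not_le :
    Nat.card {p : TransferSystem L × TransferSystem L //
        SupIrred p.1 ∧ InfIrred p.2 ∧ ¬ p.1 ≤ p.2} =
      Nat.card {q : (L × L) × (L × L) // IsLESquare q ∧ ¬ q.1.2 ≤ q.2.1} := by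
  refine (Nat.card_eq_of_bijective (fun q => ⟨(gen q.1.2.1 q.1.2.2, avoiding q.1.1.1 q.1.1.2),
    supIrred_gen (q.2.1.snd_lt q.2.2), infIrred_avoiding (q.2.1.fst_lt q.2.2),
    fun h => q.2.2 ((gen_le_avoiding_iff q.2.1.2.1).1 h q.2.1.2.2.1 q.2.1.2.2.2)⟩)
    ⟨?_, ?_⟩).symm
  · intro q q' h
    obtain ⟨hg, ha⟩ := Prod.ext_iff.1 (congrArg Subtype.val h)
    obtain ⟨ha1, hb1⟩ := eq_of_gen_eq (q.2.1.snd_lt q.2.2) (q'.2.1.snd_lt q'.2.2) hg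
    obtain ⟨hx1, hy1⟩ := eq_of_avoiding_eq (q.2.1.fst_lt q.2.2) (q'.2.1.fst_lt q'.2.2) ha
    exact Subtype.ext (Prod.ext (Prod.ext hx1 hy1) (Prod.ext ha1 hb1))
  · rintro ⟨⟨S, T⟩, hS, hT, hle⟩
    obtain ⟨a, b, hab, rfl⟩ := exists_eq_gen_of_supIrred hS
    obtain ⟨x, y, hxy, rfl⟩ := exists_eq_avoiding_of_infIrred hT
    obtain ⟨hxa, hyb, hya⟩ : x ≤ a ∧ y ≤ b ∧ ¬ y ≤ a := by
      simpa only [gen_le_avoiding_iff hab.le, Classical.not_imp] using hle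
    exact ⟨⟨((x, y), (a, b)), ⟨hxy.le, hab.le, hxa, hyb⟩, hya⟩, rfl⟩

theorem codensity_eq :
    codensity (TransferSystem L) =
      ((Nat.card {q : (L × L) × (L × L) // IsLESquare q} : ℚ) -
          Nat.card {q : (L × L) × (L × L) // IsLESquare q ∧ q.1.2 ≤ q.2.1}) /
        ((Nat.card {p : L × L // p.1 ≤ p.2} : ℚ) - Nat.card L) ^ 2 := by
  rw [codensity, natCard_supIrred, natCard_infIrred, natCard_supIrred_infIrred_not_le,
    ← natCard_subtype_and_add_and_not IsLESquare (fun q : (L × L) × (L × L) => q.1.2 ≤ q.2.1),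
    ← natCard_lt_add_natCard L]
  push_cast
  ring

end TransferSystem

section Products

variable (X Y : Type*) [Preorder X] [Preorder Y]

theorem natCard_le_prod :
    Nat.card {p : (X × Y) × (X × Y) // p.1 ≤ p.2} =
      Nat.card {p : X × X // p.1 ≤ p.2} * Nat.card {p : Y × Y // p.1 ≤ p.2} :=
  natCard_subtype_eq_mul (Equiv.prodProdProdComm X Y X Y) fun _ => Prod.le_def

/-- Splits `((x, y), (a, b))` in `X × Y` into its two coordinate quadruples. -/
def quadProdEquiv :
    ((X × Y) × (X × Y)) × ((X × Y) × (X × Y)) ≃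
      ((X × X) × (X × X)) × ((Y × Y) × (Y × Y)) :=
  ((Equiv.prodProdProdComm X Y X Y).prodCongr (Equiv.prodProdProdComm X Y X Y)).trans
    (Equiv.prodProdProdComm (X × X) (Y × Y) (X × X) (Y × Y))

theorem natCard_isLESquare_prod :
    Nat.card {q : ((X × Y) × (X × Y)) × ((X × Y) × (X × Y)) // IsLESquare q} =
      Nat.card {q : (X × X) × (X × X) // IsLESquare q} *
        Nat.card {q : (Y × Y) × (Y × Y) // IsLESquare q} :=
  natCard_subtype_eq_mul (quadProdEquiv X Y) fun _ => by
    simp only [IsLESquare, quadProdEquiv, Prod.le_def]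
    tauto

theorem natCard_chain_prod :
    Nat.card {q : ((X × Y) × (X × Y)) × ((X × Y) × (X × Y)) // IsLESquare q ∧ q.1.2 ≤ q.2.1} =
      Nat.card {q : (X × X) × (X × X) // IsLESquare q ∧ q.1.2 ≤ q.2.1} *
        Nat.card {q : (Y × Y) × (Y × Y) // IsLESquare q ∧ q.1.2 ≤ q.2.1} :=
  natCard_subtype_eq_mul (quadProdEquiv X Y) fun _ => by
    simp only [IsLESquare, quadProdEquiv, Prod.le_def]
    tauto

end Products

section Chains

/-- A monotone `k`-tuple is the sorted list of its multiset of values. -/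
def orderHomFinEquivSym (α : Type*) [LinearOrder α] (k : ℕ) : (Fin k →o α) ≃ Sym α k where
  toFun f := ⟨List.ofFn f, by simp⟩
  invFun s := ⟨fun i => (s : Multiset α).sort[i.1]'(by simp),
    fun i j h => (Multiset.pairwise_sort (s : Multiset α) (· ≤ ·)).sortedLE.monotone_get
      (a := ⟨i.1, by simp⟩) (b := ⟨j.1, by simp⟩) h⟩
  left_inv f := by
    have hs : (↑(List.ofFn f) : Multiset α).sort = List.ofFn f :=
      List.mergeSort_eq_self _ f.monotone.sortedLE_ofFn.pairwise
    ext i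
    simp [hs]
  right_inv s := by
    apply Subtype.ext
    change ((List.ofFn _ : List α) : Multiset α) = ↑s
    conv_rhs => rw [← Multiset.sort_eq (s : Multiset α) (· ≤ ·)]
    congr 1
    exact List.ext_getElem (by simp) fun _ _ _ => by simp; rfl

theorem natCard_orderHom_fin (α : Type*) [LinearOrder α] (k : ℕ) :
    Nat.card (Fin k →o α) = (Nat.card α).multichoose k := by
  rw [Nat.card_congr (orderHomFinEquivSym α k), Sym.natCard_sym_eq_multichoose]

variable {α : Type*}

def chain4Equiv [Preorder α] :
    {q : (α × α) × (α × α) // IsLESquare q ∧ q.1.2 ≤ q.2.1} ≃ (Fin 4 →o α) where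
  toFun q := ⟨![q.1.1.1, q.1.1.2, q.1.2.1, q.1.2.2], Fin.monotone_iff_le_succ.2 fun i => by
    fin_cases i
    exacts [q.2.1.1, q.2.2, q.2.1.2.1]⟩
  invFun f := ⟨((f 0, f 1), (f 2, f 3)),
    ⟨f.mono (by decide), f.mono (by decide), f.mono (by decide), f.mono (by decide)⟩,
    f.mono (by decide)⟩
  left_inv _ := rfl
  right_inv f := by ext i; fin_cases i <;> rfl

def chain3Equiv [Preorder α] :
    {q : (α × α) × (α × α) // IsLESquare q ∧ q.1.2 = q.2.1} ≃ (Fin 3 →o α) where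
  toFun q := ⟨![q.1.1.1, q.1.1.2, q.1.2.2], Fin.monotone_iff_le_succ.2 fun i => by
    fin_cases i
    exacts [q.2.1.1, q.2.1.2.2.2]⟩
  invFun f := ⟨((f 0, f 1), (f 1, f 2)),
    ⟨f.mono (by decide), f.mono (by decide), f.mono (by decide), f.mono (by decide)⟩, rfl⟩
  left_inv q := Subtype.ext (Prod.ext rfl (Prod.ext q.2.2 rfl))
  right_inv f := by ext i; fin_cases i <;> rfl

theorem natCard_le_eq_choose [LinearOrder α] [Fintype α] :
    Nat.card {p : α × α // p.1 ≤ p.2} = (Fintype.card α + 1).choose 2 := by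
  rw [← Nat.card_congr Sym2.sortEquiv, Nat.card_eq_fintype_card, Sym2.card]

/-- Swapping `y` and `a` matches squares with `a < y` and those with `y < a`. -/
theorem natCard_isLESquare_add_natCard_eq_two_mul [LinearOrder α] [Finite α] :
    Nat.card {q : (α × α) × (α × α) // IsLESquare q} +
        Nat.card {q : (α × α) × (α × α) // IsLESquare q ∧ q.1.2 = q.2.1} =
      2 * Nat.card {q : (α × α) × (α × α) // IsLESquare q ∧ q.1.2 ≤ q.2.1} := by
  have hsplit := natCard_subtype_and_add_and_not IsLESquare
    (fun q : (α × α) × (α × α) => q.1.2 ≤ q.2.1)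
  have hchain := natCard_subtype_and_add_and_not
    (fun q : (α × α) × (α × α) => IsLESquare q ∧ q.1.2 ≤ q.2.1) (fun q => q.1.2 = q.2.1)
  have heq : Nat.card {q : (α × α) × (α × α) // (IsLESquare q ∧ q.1.2 ≤ q.2.1) ∧ q.1.2 = q.2.1} =
      Nat.card {q : (α × α) × (α × α) // IsLESquare q ∧ q.1.2 = q.2.1} :=
    Nat.card_congr (Equiv.subtypeEquivRight fun q =>
      ⟨fun h => ⟨h.1.1, h.2⟩, fun h => ⟨⟨h.1, h.2.le⟩, h.2⟩⟩)
  have hswap :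
      Nat.card {q : (α × α) × (α × α) // (IsLESquare q ∧ q.1.2 ≤ q.2.1) ∧ ¬ q.1.2 = q.2.1} =
        Nat.card {q : (α × α) × (α × α) // IsLESquare q ∧ ¬ q.1.2 ≤ q.2.1} :=
    Nat.card_congr ((Equiv.prodProdProdComm α α α α).subtypeEquiv fun _ => by
      simp only [IsLESquare, Prod.le_def, Equiv.prodProdProdComm, Equiv.coe_fn_mk, not_le,
        lt_iff_le_and_ne]
      tauto)
  omega

theorem natCard_le_fin (s : ℕ) :
    (Nat.card {p : Fin s × Fin s // p.1 ≤ p.2} : ℚ) = s * (s + 1) / 2 := by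
  rw [natCard_le_eq_choose, Fintype.card_fin, Nat.cast_choose_two]
  push_cast
  ring

theorem natCard_chain_fin (s : ℕ) :
    (Nat.card {q : (Fin s × Fin s) × (Fin s × Fin s) // IsLESquare q ∧ q.1.2 ≤ q.2.1} : ℚ) =
      s * (s + 1) * (s + 2) * (s + 3) / 24 := by
  rw [Nat.card_congr chain4Equiv, natCard_orderHom_fin, Nat.card_fin, Nat.multichoose_eq,
    Nat.cast_choose_eq_ascPochhammer_div]
  simp [ascPochhammer_succ_eval, Nat.factorial]

theorem natCard_isLESquare_fin (s : ℕ) :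
    (Nat.card {q : (Fin s × Fin s) × (Fin s × Fin s) // IsLESquare q} : ℚ) =
      s * (s + 1) ^ 2 * (s + 2) / 12 := by
  have h3 : (Nat.card {q : (Fin s × Fin s) × (Fin s × Fin s) // IsLESquare q ∧ q.1.2 = q.2.1} : ℚ)
      = s * (s + 1) * (s + 2) / 6 := by
    rw [Nat.card_congr chain3Equiv, natCard_orderHom_fin, Nat.card_fin, Nat.multichoose_eq,
      Nat.cast_choose_eq_ascPochhammer_div]
    simp [ascPochhammer_succ_eval, Nat.factorial]
  have h := congrArg (Nat.cast : ℕ → ℚ) (natCard_isLESquare_add_natCard_eq_two_mul (α := Fin s))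
  push_cast at h
  rw [h3, natCard_chain_fin] at h
  linarith

end Chains

theorem codensity_chain_prod_general (n m : ℕ) :
    codensity (TransferSystem (Fin (n + 1) × Fin (m + 1))) =
      ((m : ℚ) + 2) * ((m : ℚ) + 3) * ((n : ℚ) + 2) * ((n : ℚ) + 3) *
          (3 * m * n + 4 * m + 4 * n) /
        (36 * ((m : ℚ) + 1) * ((n : ℚ) + 1) * (2 * m + 2 * n + m * n) ^ 2) := by
  rw [TransferSystem.codensity_eq, natCard_isLESquare_prod, natCard_chain_prod, natCard_le_prod,
    Nat.card_prod]
  push_cast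
  rw [natCard_isLESquare_fin, natCard_isLESquare_fin, natCard_chain_fin, natCard_chain_fin,
    natCard_le_fin, natCard_le_fin, Nat.card_fin, Nat.card_fin]
  push_cast
  rcases Nat.eq_zero_or_pos (2 * m + 2 * n + m * n) with h | h
  · -- both denominators vanish, and `x / 0 = 0`
    obtain ⟨rfl, rfl⟩ : n = 0 ∧ m = 0 := by omega
    norm_num
  · have hpos : (0 : ℚ) < 2 * m + 2 * n + m * n := by exact_mod_cast h
    have hnm := mul_pos (mul_pos n.cast_add_one_pos m.cast_add_one_pos) hpos
    rw [div_eq_div_iff (pow_pos (by nlinarith) 2).ne' (by positivity)]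
    ring

/-- For `n, m ≥ 1`,
`ρ(Tr([n] × [m])) = (m+2)(m+3)(n+2)(n+3)(3mn+4m+4n) / (36(m+1)(n+1)(2m+2n+mn)²)`. -/
theorem codensity_chain_prod (n m : ℕ) (hn : 1 ≤ n) (hm : 1 ≤ m) :
    codensity (TransferSystem (Fin (n + 1) × Fin (m + 1))) =
      ((m : ℚ) + 2) * ((m : ℚ) + 3) * ((n : ℚ) + 2) * ((n : ℚ) + 3) *
          (3 * m * n + 4 * m + 4 * n) /
        (36 * ((m : ℚ) + 1) * ((n : ℚ) + 1) * (2 * m + 2 * n + m * n) ^ 2) :=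
  codensity_chain_prod_general n m
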